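/- A commutative unital quantale Q is Noetherian (every ascending chain of ideals stabilizes, equivalently every ideal is finitely generated) if and only if every class Σ of ideals of Q, with the quantale topology, is quasi-compact. -/

import Mathlib

/-!
Ideals of a complete lattice, ordered by inclusion, form a complete lattice (meets are
intersections), and the chain condition is `WellFoundedGT` of that lattice.

A cover of `Σ` by subbasic opens `(I↑)ᶜ`, `I ∈ A`, misses exactly the members of `Σ` above
`sSup A`. Under the chain condition `sSup A` is the join of finitely many `I ∈ A`, and those
already give a subcover; by Alexander's subbasis theorem `Σ` is compact. Conversely, for a
chain `(f n)` the closed sets `(f n)↑` in `Σ = {f n | n}` are nested and nonempty, so by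
compactness some `f k` lies in all of them, i.e. bounds the chain.
-/

namespace QuantalePaper

/-- An ideal of a complete lattice: nonempty, downward closed, closed under binary joins. -/
structure QIdeal (Q : Type*) [CompleteLattice Q] where
  carrier : Set Q
  nonempty' : carrier.Nonempty
  sup_mem' : ∀ ⦃x⦄, x ∈ carrier → ∀ ⦃y⦄, y ∈ carrier → x ⊔ y ∈ carrier
  lower' : ∀ ⦃x⦄, x ∈ carrier → ∀ ⦃l : Q⦄, l ≤ x → l ∈ carrier

namespace QIdeal

variable {Q : Type*} [CompleteLattice Q]

instance : SetLike (QIdeal Q) Q where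
  coe := carrier
  coe_injective := by rintro ⟨a,_,_,_⟩ ⟨b,_,_,_⟩ h; simpa using h

instance : PartialOrder (QIdeal Q) := .ofSetLike (QIdeal Q) Q

/-- A proper ideal. -/
def IsProper (I : QIdeal Q) : Prop := (⊤ : Q) ∉ I

/-- A maximal ideal: a proper ideal maximal among proper ideals. -/
def IsMaximal (I : QIdeal Q) : Prop :=
  I.IsProper ∧ ∀ J : QIdeal Q, J.IsProper → I ≤ J → J = I

/-- A prime ideal. -/
def IsPrime [Mul Q] (I : QIdeal Q) : Prop :=
  I.IsProper ∧ ∀ x y : Q, x * y ∈ I → x ∈ I ∨ y ∈ I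

end QIdeal

variable {Q : Type*} [CompleteLattice Q]

/-- The subbasic closed set `I↑ ∩ Σ` inside the subtype of a class `S` of ideals. -/
def up (S : Set (QIdeal Q)) (I : QIdeal Q) : Set ↥S := {J : ↥S | (I : Set Q) ⊆ (J : QIdeal Q)}

/-- The quantale topology on a class `S` of ideals, generated by the sets `up S I`
as a subbasis of closed sets. -/
def qTop (S : Set (QIdeal Q)) : TopologicalSpace ↥S :=
  .generateFrom {U | ∃ I : QIdeal Q, U = (up S I)ᶜ}

/-- `X↑` for a set `X` of ideals: members of `S` containing the intersection `⋀X`,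
with `∅↑ = ∅`. -/
def upSet (S : Set (QIdeal Q)) (X : Set (QIdeal Q)) : Set ↥S :=
  {J : ↥S | X.Nonempty ∧ ∀ x : Q, (∀ I ∈ X, x ∈ I) → x ∈ (J : QIdeal Q)}

namespace QIdeal

theorem bot_mem (I : QIdeal Q) : (⊥ : Q) ∈ I :=
  I.nonempty'.elim fun _ hx => I.lower' hx bot_le

instance : InfSet (QIdeal Q) where
  sInf A :=
    { carrier := ⋂ I ∈ A, (I : Set Q)
      nonempty' := ⟨⊥, Set.mem_iInter₂.2 fun I _ => I.bot_mem⟩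
      sup_mem' := fun _ hx _ hy => Set.mem_iInter₂.2 fun I hI =>
        I.sup_mem' (Set.mem_iInter₂.1 hx I hI) (Set.mem_iInter₂.1 hy I hI)
      lower' := fun _ hx _ hl => Set.mem_iInter₂.2 fun I hI =>
        I.lower' (Set.mem_iInter₂.1 hx I hI) hl }

theorem isGLB_sInf (A : Set (QIdeal Q)) : IsGLB A (sInf A) :=
  ⟨fun _ hI => Set.biInter_subset_of_mem hI, fun _ hJ => Set.subset_iInter₂ hJ⟩

noncomputable instance : CompleteLattice (QIdeal Q) := completeLatticeOfInf _ isGLB_sInf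

end QIdeal

attribute [local instance] qTop

theorem mem_up {S : Set (QIdeal Q)} {I : QIdeal Q} {J : S} : J ∈ up S I ↔ I ≤ J.1 :=
  Iff.rfl

theorem isClosed_up (S : Set (QIdeal Q)) (I : QIdeal Q) : IsClosed (up S I) :=
  isOpen_compl_iff.1 (TopologicalSpace.GenerateOpen.basic _ ⟨I, rfl⟩)

theorem compactSpace_of_wellFoundedGT [WellFoundedGT (QIdeal Q)] (S : Set (QIdeal Q)) :
    CompactSpace S := by
  refine compactSpace_generateFrom rfl fun P hP hcover => ?_
  set A : Set (QIdeal Q) := {I | (up S I)ᶜ ∈ P}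
  obtain ⟨t, htA, hsSup⟩ := CompleteLattice.WellFoundedGT.isSupFiniteCompact (QIdeal Q) A
  refine ⟨(fun I => (up S I)ᶜ) '' t, ?_, t.finite_toSet.image _, ?_⟩
  · rintro _ ⟨I, hI, rfl⟩
    exact htA hI
  refine Set.eq_univ_of_forall fun J => by_contra fun hJ => ?_
  have hA : sSup A ≤ J.1 := hsSup ▸ Finset.sup_le fun I hI =>
    mem_up.1 (not_not.1 fun hJI => hJ ⟨_, ⟨I, hI, rfl⟩, hJI⟩)
  obtain ⟨U, hUP, hJU⟩ := Set.mem_sUnion.1 (hcover ▸ Set.mem_univ J)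
  obtain ⟨I, rfl⟩ := hP hUP
  exact hJU (mem_up.2 ((le_sSup (s := A) hUP).trans hA))

theorem exists_forall_le_of_compactSpace_range {f : ℕ → QIdeal Q} (hf : Monotone f)
    [CompactSpace (Set.range f)] : ∃ k, ∀ n, f n ≤ f k := by
  have hanti : Antitone fun n => up (Set.range f) (f n) :=
    fun m n hmn J hJ => (hf hmn).trans (mem_up.1 hJ)
  obtain ⟨⟨_, k, rfl⟩, hk⟩ := IsCompact.nonempty_iInter_of_directed_nonempty_isCompact_isClosed
    _ hanti.directed_ge (fun n => ⟨⟨f n, n, rfl⟩, mem_up.2 le_rfl⟩)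
    (fun n => (isClosed_up _ _).isCompact) (fun n => isClosed_up _ _)
  exact ⟨k, fun n => Set.mem_iInter.1 hk n⟩

theorem wellFoundedGT_iff_forall_compactSpace :
    WellFoundedGT (QIdeal Q) ↔ ∀ S : Set (QIdeal Q), CompactSpace S := by
  refine ⟨fun _ => compactSpace_of_wellFoundedGT, fun h => ?_⟩
  refine wellFoundedGT_iff_monotone_chain_condition.2 fun f => ?_
  obtain ⟨k, hk⟩ := exists_forall_le_of_compactSpace_range f.monotone
  exact ⟨k, fun m hm => le_antisymm (f.monotone hm) (hk m)⟩

theorem stmt7_general :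
    (∀ f : ℕ → QIdeal Q, Monotone f → ∃ n : ℕ, ∀ m : ℕ, n ≤ m → f m = f n) ↔
      ∀ S : Set (QIdeal Q), @CompactSpace ↥S (qTop S) := by
  rw [← wellFoundedGT_iff_forall_compactSpace, wellFoundedGT_iff_monotone_chain_condition]
  exact ⟨fun h f => (h f f.monotone).imp fun _ hn m hm => (hn m hm).symm,
    fun h f hf => (h ⟨f, hf⟩).imp fun _ hn m hm => (hn m hm).symm⟩

theorem stmt7 [CommMonoid Q] [IsQuantale Q] (htop : (1 : Q) = ⊤) :
    (∀ f : ℕ → QIdeal Q, Monotone f → ∃ n : ℕ, ∀ m : ℕ, n ≤ m → f m = f n) ↔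
      ∀ S : Set (QIdeal Q), @CompactSpace ↥S (qTop S) :=
  stmt7_general

end QuantalePaper
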